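/- arXiv:2404.06525 — 2 statements merged into one kernel-verified Lean document; each statement's English description precedes it below -/
import Mathlib

section
/- Let 𝐇 be an invertible s×s Hermitian complex matrix, let 𝐒 : U → Matrix(s,s,ℂ) be a function on an open set U ⊆ ℂ^{n−s} with 𝐒(ζ)ᵀ = 𝐒(ζ) for all ζ, and assume all the inverses below exist on U. Define H(ζ) := 𝐇·(Id − conj(𝐒(ζ))·𝐇ᵀ·𝐒(ζ)·𝐇)⁻¹ and S(ζ) := 𝐇ᵀ·(Id − 𝐒(ζ)·𝐇·conj(𝐒(ζ))·𝐇ᵀ)⁻¹·𝐒(ζ)·𝐇, and let M := {(w,z,ζ) : Re(w) = zᵀ·H(ζ)·conj(z) + Re(conj(z)ᵀ·S(ζ)·conj(z))}. Fix a ∈ ℂˢ, b ∈ ℝ, t ∈ ℝ, and set B(ζ) := a − 𝐒(ζ)·𝐇·conj(a). Then the map Φ_t(w,z,ζ) := (w + 2bit + 2t·conj(a)ᵀ·𝐇ᵀ·z + t²·conj(a)ᵀ·𝐇ᵀ·B(ζ), z + t·B(ζ), ζ) maps M into M. -/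
/-!
Write `K`, `T` for the matrices `H(ζ)`, `S(ζ)` and `v = a - 𝐒𝐇ā`. The model is the level set
`Re w = φ(z)` of `φ(z) = Re (zᵀ K z̄) + Re (z̄ᵀ T z̄)`. The push-through identity
`X (1 - Y X)⁻¹ = (1 - X Y)⁻¹ X` shows that `K` is Hermitian and `T` symmetric, so that
`φ(z + t v) = φ(z) + 2t Re (zᵀ c) + t² Re (vᵀ c)` with `c = K v̄ + T̄ v`. Since `T̄ = K 𝐒̄ 𝐇ᵀ`,
`c = K (1 - 𝐒̄ 𝐇ᵀ 𝐒 𝐇) ā = 𝐇 ā`, and the increment of `φ` is exactly the increment of `Re w`.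
-/

open Matrix

namespace Matrix

variable {n R : Type*} [CommRing R]

theorem dotProduct_mulVec_comm [Fintype n] (M : Matrix n n R) (x y : n → R) :
    x ⬝ᵥ M *ᵥ y = y ⬝ᵥ Mᵀ *ᵥ x := by
  rw [dotProduct_mulVec, dotProduct_comm, mulVec_transpose]

theorem mul_inv_one_sub_mul_comm [Fintype n] [DecidableEq n] (X Y : Matrix n n R) :
    X * (1 - Y * X)⁻¹ = (1 - X * Y)⁻¹ * X := by
  -- `1 - X * Y` and `1 - Y * X` have the same determinant, so both inverses are junk together.
  by_cases h : IsUnit (1 - Y * X).det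
  · have h' : IsUnit (1 - X * Y).det := by rwa [det_one_sub_mul_comm]
    have hcomm : (1 - X * Y) * X = X * (1 - Y * X) := by noncomm_ring
    calc X * (1 - Y * X)⁻¹ = (1 - X * Y)⁻¹ * ((1 - X * Y) * X) * (1 - Y * X)⁻¹ := by
          rw [← mul_assoc, nonsing_inv_mul _ h', one_mul]
      _ = (1 - X * Y)⁻¹ * X := by
          rw [hcomm]
          simp only [mul_assoc, mul_nonsing_inv _ h, mul_one]
  · have h' : ¬IsUnit (1 - X * Y).det := by rwa [det_one_sub_mul_comm]
    rw [nonsing_inv_apply_not_isUnit _ h, nonsing_inv_apply_not_isUnit _ h', mul_zero, zero_mul]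

variable [StarRing R]

theorem map_starRingEnd_map_starRingEnd (A : Matrix n n R) :
    (A.map (starRingEnd R)).map (starRingEnd R) = A := by
  ext i j
  exact starRingEnd_self_apply (A i j)

theorem map_starRingEnd_one_sub [DecidableEq n] (A : Matrix n n R) :
    (1 - A).map (starRingEnd R) = 1 - A.map (starRingEnd R) := by
  rw [Matrix.map_sub _ (map_sub _), Matrix.map_one _ (map_zero _) (map_one _)]

theorem transpose_map_starRingEnd (A : Matrix n n R) : (A.map (starRingEnd R))ᵀ = Aᴴ := rfl

theorem isHermitian_iff_map_starRingEnd (A : Matrix n n R) :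
    A.IsHermitian ↔ A.map (starRingEnd R) = Aᵀ := by
  rw [IsHermitian, ← transpose_map_starRingEnd]
  exact ⟨fun h => by rw [← transpose_transpose (A.map _), h],
    fun h => by rw [h, transpose_transpose]⟩

theorem IsHermitian.map_starRingEnd_transpose {A : Matrix n n R} (hA : A.IsHermitian) :
    Aᵀ.map (starRingEnd R) = A := by
  rw [transpose_map, (isHermitian_iff_map_starRingEnd A).1 hA, transpose_transpose]

theorem map_starRingEnd_nonsing_inv [Fintype n] [DecidableEq n] (A : Matrix n n R) :
    A⁻¹.map (starRingEnd R) = (A.map (starRingEnd R))⁻¹ := by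
  rw [← transpose_transpose (A⁻¹.map _), transpose_map_starRingEnd, conjTranspose_nonsing_inv,
    ← transpose_map_starRingEnd, transpose_nonsing_inv, transpose_transpose]

theorem star_mulVec_eq_map_mulVec [Fintype n] (M : Matrix n n R) (v : n → R) :
    star (M *ᵥ v) = M.map (starRingEnd R) *ᵥ star v := by
  ext i
  simp [mulVec, dotProduct, starRingEnd_apply]

theorem starRingEnd_dotProduct_mulVec [Fintype n] (M : Matrix n n R) (x y : n → R) :
    starRingEnd R (x ⬝ᵥ M *ᵥ y) = star x ⬝ᵥ M.map (starRingEnd R) *ᵥ star y := by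
  simp [mulVec, dotProduct, map_sum, starRingEnd_apply]

end Matrix

section ModelForm

variable {n : Type*} [Fintype n]

def modelForm (K T : Matrix n n ℂ) (z : n → ℂ) : ℝ :=
  (z ⬝ᵥ K *ᵥ star z).re + (star z ⬝ᵥ T *ᵥ star z).re

variable {K T : Matrix n n ℂ}

theorem Matrix.IsHermitian.conj_dotProduct_mulVec_star (hK : K.IsHermitian) (x y : n → ℂ) :
    starRingEnd ℂ (x ⬝ᵥ K *ᵥ star y) = y ⬝ᵥ K *ᵥ star x := by
  rw [starRingEnd_dotProduct_mulVec, star_star, (isHermitian_iff_map_starRingEnd K).1 hK,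
    ← dotProduct_mulVec_comm]

theorem ofReal_modelForm (hK : K.IsHermitian) (z : n → ℂ) :
    (modelForm K T z : ℂ) = z ⬝ᵥ K *ᵥ star z + ((star z ⬝ᵥ T *ᵥ star z).re : ℂ) := by
  rw [modelForm, Complex.ofReal_add,
    Complex.conj_eq_iff_re.1 (hK.conj_dotProduct_mulVec_star z z)]

theorem modelForm_add_smul (hK : K.IsHermitian) (hT : Tᵀ = T) (z v : n → ℂ) (t : ℝ) :
    modelForm K T (z + (t : ℂ) • v) = modelForm K T z
      + 2 * t * (z ⬝ᵥ (K *ᵥ star v + T.map (starRingEnd ℂ) *ᵥ v)).re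
      + t ^ 2 * (v ⬝ᵥ (K *ᵥ star v + T.map (starRingEnd ℂ) *ᵥ v)).re := by
  have hK_swap : (v ⬝ᵥ K *ᵥ star z).re = (z ⬝ᵥ K *ᵥ star v).re := by
    rw [← hK.conj_dotProduct_mulVec_star, Complex.conj_re]
  have hT_swap : (star v ⬝ᵥ T *ᵥ star z).re = (star z ⬝ᵥ T *ᵥ star v).re := by
    rw [dotProduct_mulVec_comm, hT]
  have hT_conj (x y : n → ℂ) :
      (x ⬝ᵥ T.map (starRingEnd ℂ) *ᵥ y).re = (star x ⬝ᵥ T *ᵥ star y).re := by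
    rw [← Complex.conj_re (star x ⬝ᵥ _), starRingEnd_dotProduct_mulVec, star_star, star_star]
  have hstar : star (z + (t : ℂ) • v) = star z + (t : ℂ) • star v := by
    rw [star_add, star_smul, Complex.star_def, Complex.conj_ofReal]
  simp only [modelForm, hstar, mulVec_add, mulVec_smul, dotProduct_add, add_dotProduct,
    dotProduct_smul, smul_dotProduct, smul_eq_mul, Complex.add_re, Complex.re_ofReal_mul, hT_conj]
  rw [hK_swap, hT_swap]
  ring

end ModelForm

section NormalizedModel

variable {n : Type*} [Fintype n] [DecidableEq n] {H S : Matrix n n ℂ}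

/- The matrices `H(ζ)` and `S(ζ)` of the paper, with `H = 𝐇` and `S = 𝐒(ζ)`. -/
noncomputable def modelHermitianPart (H S : Matrix n n ℂ) : Matrix n n ℂ :=
  H * (1 - S.map (starRingEnd ℂ) * Hᵀ * S * H)⁻¹

noncomputable def modelSymmetricPart (H S : Matrix n n ℂ) : Matrix n n ℂ :=
  Hᵀ * (1 - S * H * S.map (starRingEnd ℂ) * Hᵀ)⁻¹ * S * H

theorem isHermitian_modelHermitianPart (hH : H.IsHermitian) (hS : Sᵀ = S) :
    (modelHermitianPart H S).IsHermitian := by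
  have hAT : (1 - S.map (starRingEnd ℂ) * Hᵀ * S * H)ᵀ
      = 1 - Hᵀ * (S * H * S.map (starRingEnd ℂ)) := by
    simp only [transpose_sub, transpose_one, transpose_mul, ← transpose_map, hS,
      transpose_transpose, mul_assoc]
  rw [isHermitian_iff_map_starRingEnd, modelHermitianPart]
  simp only [Matrix.map_mul, map_starRingEnd_nonsing_inv, map_starRingEnd_one_sub,
    hH.map_starRingEnd_transpose, (isHermitian_iff_map_starRingEnd H).1 hH,
    map_starRingEnd_map_starRingEnd, transpose_mul, transpose_nonsing_inv, hAT]
  rw [← mul_inv_one_sub_mul_comm]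

theorem transpose_modelSymmetricPart (H : Matrix n n ℂ) (hS : Sᵀ = S) :
    (modelSymmetricPart H S)ᵀ = modelSymmetricPart H S := by
  have hBT : (1 - S * H * S.map (starRingEnd ℂ) * Hᵀ)ᵀ
      = 1 - H * S.map (starRingEnd ℂ) * Hᵀ * S := by
    simp only [transpose_sub, transpose_one, transpose_mul, ← transpose_map, hS,
      transpose_transpose, mul_assoc]
  rw [modelSymmetricPart]
  simp only [transpose_mul, transpose_transpose, transpose_nonsing_inv, hS, hBT]
  rw [← mul_assoc S, mul_inv_one_sub_mul_comm]
  simp only [mul_assoc]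

theorem map_starRingEnd_modelSymmetricPart (hH : H.IsHermitian) :
    (modelSymmetricPart H S).map (starRingEnd ℂ)
      = modelHermitianPart H S * S.map (starRingEnd ℂ) * Hᵀ := by
  simp only [modelSymmetricPart, modelHermitianPart, Matrix.map_mul, map_starRingEnd_nonsing_inv,
    map_starRingEnd_one_sub, hH.map_starRingEnd_transpose, (isHermitian_iff_map_starRingEnd H).1 hH,
    map_starRingEnd_map_starRingEnd]

theorem modelHermitianPart_mulVec_star_add (hH : H.IsHermitian)
    (hA : IsUnit (1 - S.map (starRingEnd ℂ) * Hᵀ * S * H)) (a : n → ℂ) :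
    modelHermitianPart H S *ᵥ star (a - (S * H) *ᵥ star a)
      + (modelSymmetricPart H S).map (starRingEnd ℂ) *ᵥ (a - (S * H) *ᵥ star a) = H *ᵥ star a := by
  have hKA : modelHermitianPart H S * (1 - S.map (starRingEnd ℂ) * Hᵀ * S * H) = H := by
    rw [modelHermitianPart, mul_assoc, nonsing_inv_mul _ ((isUnit_iff_isUnit_det _).1 hA), mul_one]
  rw [map_starRingEnd_modelSymmetricPart hH, star_sub, star_mulVec_eq_map_mulVec, star_star,
    Matrix.map_mul, (isHermitian_iff_map_starRingEnd H).1 hH]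
  conv_rhs => rw [← hKA]
  simp only [mulVec_sub, sub_mulVec, mulVec_mulVec, mul_sub, mul_one, mul_assoc]
  abel

end NormalizedModel

theorem transkernel_symmetry_flow_general {s m : ℕ} (H0 : Matrix (Fin s) (Fin s) ℂ)
    (hHerm : H0.IsHermitian)
    (U : Set (Fin m → ℂ))
    (S : (Fin m → ℂ) → Matrix (Fin s) (Fin s) ℂ)
    (hSsym : ∀ ζ ∈ U, (S ζ)ᵀ = S ζ)
    (hinv1 : ∀ ζ ∈ U, IsUnit (1 - (S ζ).map (starRingEnd ℂ) * H0ᵀ * S ζ * H0))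
    (a : Fin s → ℂ) (b t : ℝ) :
    Set.MapsTo
      (fun p : ℂ × (Fin s → ℂ) × (Fin m → ℂ) =>
        (p.1 + 2 * (b : ℂ) * Complex.I * (t : ℂ)
            + 2 * (t : ℂ) * (star a ⬝ᵥ H0ᵀ.mulVec p.2.1)
            + (t : ℂ) ^ 2 *
              (star a ⬝ᵥ H0ᵀ.mulVec (a - (S p.2.2 * H0).mulVec (star a))),
          p.2.1 + (t : ℂ) • (a - (S p.2.2 * H0).mulVec (star a)),
          p.2.2))
      {p : ℂ × (Fin s → ℂ) × (Fin m → ℂ) | p.2.2 ∈ U ∧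
        ((p.1.re : ℝ) : ℂ)
          = p.2.1 ⬝ᵥ (H0 * (1 - (S p.2.2).map (starRingEnd ℂ) * H0ᵀ * S p.2.2 * H0)⁻¹).mulVec
              (star p.2.1)
            + (((star p.2.1 ⬝ᵥ (H0ᵀ * (1 - S p.2.2 * H0 * (S p.2.2).map (starRingEnd ℂ) * H0ᵀ)⁻¹
                  * S p.2.2 * H0).mulVec (star p.2.1)).re : ℝ) : ℂ)}
      {p : ℂ × (Fin s → ℂ) × (Fin m → ℂ) | p.2.2 ∈ U ∧
        ((p.1.re : ℝ) : ℂ)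
          = p.2.1 ⬝ᵥ (H0 * (1 - (S p.2.2).map (starRingEnd ℂ) * H0ᵀ * S p.2.2 * H0)⁻¹).mulVec
              (star p.2.1)
            + (((star p.2.1 ⬝ᵥ (H0ᵀ * (1 - S p.2.2 * H0 * (S p.2.2).map (starRingEnd ℂ) * H0ᵀ)⁻¹
                  * S p.2.2 * H0).mulVec (star p.2.1)).re : ℝ) : ℂ)} := by
  rintro ⟨w, z, ζ⟩ ⟨hζ, hw⟩
  dsimp only at hζ hw ⊢
  have hK := isHermitian_modelHermitianPart hHerm (hSsym ζ hζ)
  have hT := transpose_modelSymmetricPart H0 (hSsym ζ hζ)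
  have hw' : w.re = modelForm (modelHermitianPart H0 (S ζ)) (modelSymmetricPart H0 (S ζ)) z :=
    Complex.ofReal_injective (hw.trans (ofReal_modelForm hK z).symm)
  refine ⟨hζ, (congrArg _ ?_).trans (ofReal_modelForm (T := modelSymmetricPart H0 (S ζ)) hK _)⟩
  rw [modelForm_add_smul hK hT, modelHermitianPart_mulVec_star_add hHerm (hinv1 ζ hζ), ← hw',
    dotProduct_mulVec_comm H0 z, dotProduct_mulVec_comm H0 (a - _)]
  simp [Complex.add_re, Complex.mul_re, ← Complex.ofReal_pow]

/-- The time-`t` flow of the infinitesimal symmetry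
`X = 2(bi + conj(a)ᵀ𝐇ᵀz)∂/∂w + (aᵀ − conj(a)ᵀ𝐇ᵀS(ζ))∂/∂z` maps the normalized
2-nondegenerate model into itself. -/
theorem transkernel_symmetry_flow {s m : ℕ} (H0 : Matrix (Fin s) (Fin s) ℂ)
    (hHerm : H0.IsHermitian) (hH : IsUnit H0)
    (U : Set (Fin m → ℂ)) (hU : IsOpen U)
    (S : (Fin m → ℂ) → Matrix (Fin s) (Fin s) ℂ)
    (hSsym : ∀ ζ ∈ U, (S ζ)ᵀ = S ζ)
    (hinv1 : ∀ ζ ∈ U, IsUnit (1 - (S ζ).map (starRingEnd ℂ) * H0ᵀ * S ζ * H0))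
    (hinv2 : ∀ ζ ∈ U, IsUnit (1 - S ζ * H0 * (S ζ).map (starRingEnd ℂ) * H0ᵀ))
    (a : Fin s → ℂ) (b t : ℝ) :
    Set.MapsTo
      (fun p : ℂ × (Fin s → ℂ) × (Fin m → ℂ) =>
        (p.1 + 2 * (b : ℂ) * Complex.I * (t : ℂ)
            + 2 * (t : ℂ) * (star a ⬝ᵥ H0ᵀ.mulVec p.2.1)
            + (t : ℂ) ^ 2 *
              (star a ⬝ᵥ H0ᵀ.mulVec (a - (S p.2.2 * H0).mulVec (star a))),
          p.2.1 + (t : ℂ) • (a - (S p.2.2 * H0).mulVec (star a)),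
          p.2.2))
      {p : ℂ × (Fin s → ℂ) × (Fin m → ℂ) | p.2.2 ∈ U ∧
        ((p.1.re : ℝ) : ℂ)
          = p.2.1 ⬝ᵥ (H0 * (1 - (S p.2.2).map (starRingEnd ℂ) * H0ᵀ * S p.2.2 * H0)⁻¹).mulVec
              (star p.2.1)
            + (((star p.2.1 ⬝ᵥ (H0ᵀ * (1 - S p.2.2 * H0 * (S p.2.2).map (starRingEnd ℂ) * H0ᵀ)⁻¹
                  * S p.2.2 * H0).mulVec (star p.2.1)).re : ℝ) : ℂ)}
      {p : ℂ × (Fin s → ℂ) × (Fin m → ℂ) | p.2.2 ∈ U ∧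
        ((p.1.re : ℝ) : ℂ)
          = p.2.1 ⬝ᵥ (H0 * (1 - (S p.2.2).map (starRingEnd ℂ) * H0ᵀ * S p.2.2 * H0)⁻¹).mulVec
              (star p.2.1)
            + (((star p.2.1 ⬝ᵥ (H0ᵀ * (1 - S p.2.2 * H0 * (S p.2.2).map (starRingEnd ℂ) * H0ᵀ)⁻¹
                  * S p.2.2 * H0).mulVec (star p.2.1)).re : ℝ) : ℂ)} :=
  transkernel_symmetry_flow_general H0 hHerm U S hSsym hinv1 a b t
end

section
/- Let 𝐇 be an invertible s×s Hermitian complex matrix, h ∈ ℝ, and set a := −i·e^{ih} ∈ ℂ. Define the (2s+2)×(2s+2) complex matrix m with block form [[1/a, 0, 0, 0], [0, 0, i·(𝐇ᵀ)⁻¹, 0], [0, i·𝐇, 0, 0], [0, 0, 0, a]]. Then m·conj(m) = Id, and consequently the map σ : gl(2s+2,ℂ) → gl(2s+2,ℂ) given by σ(X) := m·conj(X)·m⁻¹ is an involution (σ∘σ = id) which satisfies σ([X,Y]) = [σ(X), σ(Y)] for all X, Y. -/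
/-!
Since `|a| = 1`, the corner entries of `m * conj m` are `a⁻¹ * conj a⁻¹ = a * conj a = 1`; since
`i * conj i = 1` and `conj 𝐇 = 𝐇ᵀ` for Hermitian `𝐇`, its middle blocks are `(𝐇ᵀ)⁻¹ 𝐇ᵀ` and
`𝐇 𝐇⁻¹`. Hence `m⁻¹ = conj m`, so `σ ∘ σ` is conjugation by `m * conj m = 1`, and `σ` respects
products (hence commutators) as the composite of the ring homomorphism `conj` with an inner
automorphism.
-/

open Matrix

/-- The matrix `m` with block form `[[1/a,0,0,0],[0,0,i(𝐇ᵀ)⁻¹,0],[0,i𝐇,0,0],[0,0,0,a]]`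
where `a = −i e^{ih}`. -/
noncomputable def involMat {s : ℕ} (H0 : Matrix (Fin s) (Fin s) ℂ) (h : ℝ) :
    Matrix (Fin 1 ⊕ Fin s ⊕ Fin s ⊕ Fin 1) (Fin 1 ⊕ Fin s ⊕ Fin s ⊕ Fin 1) ℂ :=
  Matrix.of fun i j =>
    match i, j with
    | .inl _, .inl _ => (-Complex.I * Complex.exp ((h : ℂ) * Complex.I))⁻¹
    | .inr (.inl p), .inr (.inr (.inl q)) => Complex.I * (H0ᵀ)⁻¹ p q
    | .inr (.inr (.inl p)), .inr (.inl q) => Complex.I * H0 p q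
    | .inr (.inr (.inr _)), .inr (.inr (.inr _)) => -Complex.I * Complex.exp ((h : ℂ) * Complex.I)
    | _, _ => 0

theorem Complex.conj_exp_ofReal_mul_I (x : ℝ) :
    starRingEnd ℂ (Complex.exp (x * Complex.I)) = (Complex.exp (x * Complex.I))⁻¹ := by
  rw [← Complex.exp_conj, ← Complex.exp_neg, map_mul, Complex.conj_ofReal, Complex.conj_I,
    mul_neg]

theorem conj_commutator_of_mul_eq_one {A : Type*} [Ring A] {a b : A} (hba : b * a = 1)
    (x y : A) : a * (x * y - y * x) * b = a * x * b * (a * y * b) - a * y * b * (a * x * b) := by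
  have conj_mul : ∀ u v : A, a * u * b * (a * v * b) = a * (u * v) * b := fun u v => by
    simp only [mul_assoc]
    rw [← mul_assoc b a, hba, one_mul]
  rw [conj_mul, conj_mul, mul_sub, sub_mul]

namespace Matrix

variable {n R : Type*} [CommRing R]

theorem IsHermitian.map_starRingEnd [StarRing R] {A : Matrix n n R} (hA : A.IsHermitian) :
    A.map (starRingEnd R) = Aᵀ := by
  ext i j
  exact hA.apply j i

variable [Fintype n] [DecidableEq n]

theorem IsHermitian.transpose_inv_mul_map_starRingEnd [StarRing R] {A : Matrix n n R}
    (hA : A.IsHermitian) (hA' : IsUnit A) : Aᵀ⁻¹ * A.map (starRingEnd R) = 1 := by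
  rw [hA.map_starRingEnd]
  exact nonsing_inv_mul _ (by simpa using (isUnit_iff_isUnit_det A).mp hA')

theorem IsHermitian.mul_map_starRingEnd_transpose_inv [StarRing R] {A : Matrix n n R}
    (hA : A.IsHermitian) (hA' : IsUnit A) : A * Aᵀ⁻¹.map (starRingEnd R) = 1 := by
  rw [← transpose_nonsing_inv, transpose_map, hA.inv.map_starRingEnd, transpose_transpose]
  exact mul_nonsing_inv _ ((isUnit_iff_isUnit_det A).mp hA')

theorem mul_map_commutator_mul_inv (f : R →+* R) {M : Matrix n n R} (hM : IsUnit M.det)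
    (X Y : Matrix n n R) :
    M * (X * Y - Y * X).map f * M⁻¹
      = M * X.map f * M⁻¹ * (M * Y.map f * M⁻¹) - M * Y.map f * M⁻¹ * (M * X.map f * M⁻¹) := by
  rw [← f.mapMatrix_apply, map_sub, map_mul, map_mul]
  exact conj_commutator_of_mul_eq_one (nonsing_inv_mul M hM) _ _

theorem mul_map_starRingEnd_mul_inv_involutive [StarRing R] {M : Matrix n n R}
    (hM : M * M.map (starRingEnd R) = 1) (X : Matrix n n R) :
    M * (M * X.map (starRingEnd R) * M⁻¹).map (starRingEnd R) * M⁻¹ = X := by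
  have map_map_conj : ∀ A : Matrix n n R, (A.map (starRingEnd R)).map (starRingEnd R) = A :=
    fun A => by ext; simp
  rw [inv_eq_right_inv hM, Matrix.map_mul, Matrix.map_mul, map_map_conj, map_map_conj]
  calc M * (M.map (starRingEnd R) * X * M) * M.map (starRingEnd R)
      = M * M.map (starRingEnd R) * X * (M * M.map (starRingEnd R)) := by simp only [mul_assoc]
    _ = X := by rw [hM, one_mul, mul_one]

end Matrix

open Complex Matrix in
theorem involMat_mul_map_starRingEnd {s : ℕ} (H0 : Matrix (Fin s) (Fin s) ℂ)
    (hHerm : H0.IsHermitian) (hH : IsUnit H0) (h : ℝ) :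
    involMat H0 h * (involMat H0 h).map (starRingEnd ℂ) = 1 := by
  have hupper := hHerm.transpose_inv_mul_map_starRingEnd hH
  have hlower := hHerm.mul_map_starRingEnd_transpose_inv hH
  ext (i | i | i | i) (j | j | j | j) <;>
    simp [involMat, mul_apply, Fintype.sum_sum_type, one_apply, conj_exp_ofReal_mul_I,
      Fin.fin_one_eq_zero]
  · field_simp
    simp
  · simpa [mul_mul_mul_comm I, mul_apply, one_apply] using congrFun (congrFun hupper i) j
  · simpa [mul_mul_mul_comm I, mul_apply, one_apply] using congrFun (congrFun hlower i) j
  · field_simp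
    simp

/-- `m·conj(m) = Id`, hence `σ(X) := m·conj(X)·m⁻¹` is an involution of `gl(2s+2,ℂ)`
respecting the commutator bracket. -/
theorem involMat_involution {s : ℕ} (H0 : Matrix (Fin s) (Fin s) ℂ)
    (hHerm : H0.IsHermitian) (hH : IsUnit H0) (h : ℝ) :
    involMat H0 h * (involMat H0 h).map (starRingEnd ℂ) = 1
    ∧ (∀ X : Matrix (Fin 1 ⊕ Fin s ⊕ Fin s ⊕ Fin 1) (Fin 1 ⊕ Fin s ⊕ Fin s ⊕ Fin 1) ℂ,
        involMat H0 h * ((involMat H0 h * X.map (starRingEnd ℂ) * (involMat H0 h)⁻¹).map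
            (starRingEnd ℂ)) * (involMat H0 h)⁻¹ = X)
    ∧ (∀ X Y : Matrix (Fin 1 ⊕ Fin s ⊕ Fin s ⊕ Fin 1) (Fin 1 ⊕ Fin s ⊕ Fin s ⊕ Fin 1) ℂ,
        involMat H0 h * ((X * Y - Y * X).map (starRingEnd ℂ)) * (involMat H0 h)⁻¹
          = (involMat H0 h * X.map (starRingEnd ℂ) * (involMat H0 h)⁻¹)
              * (involMat H0 h * Y.map (starRingEnd ℂ) * (involMat H0 h)⁻¹)
            - (involMat H0 h * Y.map (starRingEnd ℂ) * (involMat H0 h)⁻¹)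
              * (involMat H0 h * X.map (starRingEnd ℂ) * (involMat H0 h)⁻¹)) := by
  have hm := involMat_mul_map_starRingEnd H0 hHerm hH h
  exact ⟨hm, mul_map_starRingEnd_mul_inv_involutive hm,
    mul_map_commutator_mul_inv _ (isUnit_det_of_right_inverse hm)⟩
end
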